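/- Let X be an infinite compact metric space, α : X → X a minimal homeomorphism, 𝒱 a line bundle, ℰ = Γ(𝒱,α), and Y ⊆ X a nonempty closed subset meeting each α-orbit at most once such that for every N there is an open W_N ⊇ Y with 𝒱|_{α^n(W_N)} trivial for |n| ≤ N. Then for any nonzero positive a, b ∈ C(X) there exists a nonzero positive f ∈ C(X) with f ≾ a and f ≾ b in the Cuntz subequivalence relation of the orbit-breaking algebra O(ℰ_Y). -/

import Mathlib

def Sect {X : Type*} [TopologicalSpace X] (V : X → Type*)
    [∀ x, NormedAddCommGroup (V x)] [TopologicalSpace (Bundle.TotalSpace ℂ V)] :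
    Type _ :=
  {s : ∀ x, V x // Continuous fun x => (Bundle.TotalSpace.mk x (s x) : Bundle.TotalSpace ℂ V)}

def TrivialOver {X : Type*} [TopologicalSpace X] (V : X → Type*)
    [∀ x, NormedAddCommGroup (V x)] [TopologicalSpace (Bundle.TotalSpace ℂ V)]
    (W : Set X) : Prop :=
  ∃ s : ∀ x, V x,
    ContinuousOn (fun x => (Bundle.TotalSpace.mk x (s x) : Bundle.TotalSpace ℂ V)) W ∧
    ∀ x ∈ W, ‖s x‖ = 1

noncomputable def toC {X : Type*} [TopologicalSpace X] (f : C(X, ℝ)) : C(X, ℂ) :=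
  ⟨fun x => (f x : ℂ), Complex.continuous_ofReal.comp f.continuous⟩

structure IsCovRep {X : Type*} [TopologicalSpace X] [CompactSpace X] (α : X ≃ₜ X)
    (V : X → Type*) [∀ x, NormedAddCommGroup (V x)] [∀ x, InnerProductSpace ℂ (V x)]
    [TopologicalSpace (Bundle.TotalSpace ℂ V)]
    (B : Type*) [NormedRing B] [StarRing B] [NormedAlgebra ℂ B]
    (p : C(X, ℂ) →⋆ₐ[ℂ] B) (t : Sect V → B) : Prop where
  injective : Function.Injective p
  map_add : ∀ ξ η ζ : Sect V, (∀ x, ζ.1 x = ξ.1 x + η.1 x) → t ζ = t ξ + t η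
  inner_right : ∀ (ξ η : Sect V) (g : C(X, ℂ)),
    (∀ x, (inner ℂ (ξ.1 x) (η.1 x) : ℂ) = g x) → star (t ξ) * t η = p g
  inner_left : ∀ (ξ η : Sect V) (g : C(X, ℂ)),
    (∀ x, (inner ℂ (η.1 (α.symm x)) (ξ.1 (α.symm x)) : ℂ) = g x) →
      t ξ * star (t η) = p g
  left_act : ∀ (f : C(X, ℂ)) (ξ η : Sect V),
    (∀ x, η.1 x = f (α x) • ξ.1 x) → t η = p f * t ξ
  right_act : ∀ (f : C(X, ℂ)) (ξ η : Sect V),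
    (∀ x, η.1 x = f x • ξ.1 x) → t η = t ξ * p f

noncomputable def OBalg {X : Type*} [TopologicalSpace X] [CompactSpace X] (α : X ≃ₜ X)
    (V : X → Type*) [∀ x, NormedAddCommGroup (V x)] [∀ x, InnerProductSpace ℂ (V x)]
    [TopologicalSpace (Bundle.TotalSpace ℂ V)]
    (B : Type*) [NormedRing B] [StarRing B] [NormedAlgebra ℂ B] [StarModule ℂ B]
    [ContinuousStar B]
    (p : C(X, ℂ) →⋆ₐ[ℂ] B) (t : Sect V → B) (Y : Set X) : StarSubalgebra ℂ B :=
  (StarAlgebra.adjoin ℂ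
    (Set.range ⇑p ∪ t '' {ξ : Sect V | ∀ x, α x ∈ Y → ξ.1 x = 0})).topologicalClosure

/-- Cuntz subequivalence `x ≾ y` relative to a *-subalgebra `D`. -/
def CuntzLE {B : Type*} [NormedRing B] [StarRing B] [NormedAlgebra ℂ B] [StarModule ℂ B]
    (D : StarSubalgebra ℂ B) (x y : B) : Prop :=
  ∀ ε > (0:ℝ), ∃ r ∈ D, ‖r * y * star r - x‖ < ε

/-!
Pick `y ∈ Y`. By minimality its forward orbit meets the open supports of `a` and `b`, say
`a (αᵐ y) > 0` and `b (αᵏ y) > 0`. For a point `q` with `α q ∉ Y` and a unit section near `q`,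
cutting the section off so that it vanishes on `α⁻¹(Y)` gives `ξ ∈ ℰ_Y` with
`t(ξ)* p(c) t(ξ) = p((c ∘ α) |ξ|²)`, so conjugation inside `O(ℰ_Y)` moves positivity of `c`
from `α q` back to `q`. Since the orbit `α y, α² y, …` avoids `Y` and the bundle is trivial
near `αʲ y` for `j ≤ max m k`, iterating gives `A, C ≥ 0` with `A y, C y > 0`,
`p(A) ≾ p(a)`, `p(C) ≾ p(b)`; then `f = A C` works, as `p(AC) = p(√C) p(A) p(√C)`.
-/

open Bundle Set Filter Topology

section Bundle

variable {X : Type*} [TopologicalSpace X] {V : X → Type*} [∀ x, NormedAddCommGroup (V x)]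
  [∀ x, NormedSpace ℂ (V x)] [TopologicalSpace (TotalSpace ℂ V)] [FiberBundle ℂ V]
  [VectorBundle ℂ ℂ V]

theorem continuous_totalSpaceMk_smul_of_continuousOn {W : Set X} (hW : IsOpen W)
    {s : ∀ x, V x} (hs : ContinuousOn (fun x => (TotalSpace.mk x (s x) : TotalSpace ℂ V)) W)
    {c : X → ℂ} (hc : Continuous c) (hsupp : tsupport c ⊆ W) :
    Continuous fun x => (TotalSpace.mk x (c x • s x) : TotalSpace ℂ V) := by
  refine continuous_iff_continuousAt.2 fun x₀ => ?_
  rw [FiberBundle.continuousAt_totalSpace]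
  refine ⟨continuousAt_id, ?_⟩
  set e := trivializationAt ℂ V x₀
  have he : e.baseSet ∈ 𝓝 x₀ :=
    e.open_baseSet.mem_nhds (FiberBundle.mem_baseSet_trivializationAt ℂ V x₀)
  by_cases hx₀ : x₀ ∈ W
  · have hsx₀ := ((FiberBundle.continuousAt_totalSpace ℂ _).1
      (hs.continuousAt (hW.mem_nhds hx₀))).2
    refine (hc.continuousAt.smul hsx₀).congr ?_
    filter_upwards [he] with x hx
    have h := congrFun (e.coe_linearMapAt_of_mem (R := ℂ) hx)
    rw [← h, map_smul, h]
    rfl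
  · refine continuousAt_const.congr (f := fun _ => (0 : ℂ)) ?_
    filter_upwards [he, (isClosed_tsupport c).isOpen_compl.mem_nhds fun h => hx₀ (hsupp h)]
      with x hx hxc
    rw [image_eq_zero_of_notMem_tsupport hxc, zero_smul]
    exact (congrArg Prod.snd (e.zeroSection ℂ hx)).symm

theorem exists_sect_norm_eq_bump [CompactSpace X] [T2Space X] {q : X} {U O : Set X}
    (hU : U ∈ 𝓝 q) (hUV : TrivialOver V U) (hO : IsOpen O) (hqO : q ∈ O) :
    ∃ (ξ : Sect V) (φ : C(X, ℝ)), φ q = 1 ∧ (∀ x, ‖ξ.1 x‖ = φ x) ∧ ∀ x ∉ O, ξ.1 x = 0 := by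
  obtain ⟨s, hs, hs1⟩ := hUV
  have hW : IsOpen (interior U ∩ O) := isOpen_interior.inter hO
  obtain ⟨φ, hφW, hφq, hφ01⟩ := exists_tsupport_one_of_isOpen_isClosed hW
    isClosed_closure.isCompact isClosed_singleton
    (singleton_subset_iff.2 ⟨mem_interior_iff_mem_nhds.2 hU, hqO⟩)
  have hφ0 : ∀ x ∉ interior U ∩ O, φ x = 0 := fun x hx =>
    image_eq_zero_of_notMem_tsupport fun h => hx (hφW h)
  refine ⟨⟨fun x => (φ x : ℂ) • s x, continuous_totalSpaceMk_smul_of_continuousOn hW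
    (hs.mono (inter_subset_left.trans interior_subset)) (by fun_prop)
    ((tsupport_comp_subset Complex.ofReal_zero φ).trans hφW)⟩, φ, hφq rfl, fun x => ?_,
    fun x hx => by simp [hφ0 x fun h => hx h.2]⟩
  by_cases hx : x ∈ interior U ∩ O
  · simp [norm_smul, hs1 x (interior_subset hx.1), abs_of_nonneg (hφ01 x).1]
  · simp [hφ0 x hx]

end Bundle

section ExactCuntz

variable {B : Type*} [NormedRing B] [StarRing B] [NormedAlgebra ℂ B] [StarModule ℂ B]
  {D : StarSubalgebra ℂ B}

def ExactCuntzLE (D : StarSubalgebra ℂ B) (x y : B) : Prop :=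
  ∃ r ∈ D, r * y * star r = x

theorem ExactCuntzLE.refl (x : B) : ExactCuntzLE D x x :=
  ⟨1, one_mem D, by simp⟩

theorem ExactCuntzLE.trans {x y z : B} (hxy : ExactCuntzLE D x y) (hyz : ExactCuntzLE D y z) :
    ExactCuntzLE D x z := by
  obtain ⟨r, hr, rfl⟩ := hxy
  obtain ⟨r', hr', rfl⟩ := hyz
  exact ⟨r * r', mul_mem hr hr', by simp only [star_mul, mul_assoc]⟩

theorem ExactCuntzLE.cuntzLE {x y : B} (h : ExactCuntzLE D x y) : CuntzLE D x y := by
  obtain ⟨r, hr, rfl⟩ := h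
  exact fun ε hε => ⟨r, hr, by simpa using hε⟩

end ExactCuntz

theorem exists_iterate_mem_of_minimal {X : Type*} [TopologicalSpace X] {f : X → X}
    (hf : Continuous f) (hmin : ∀ E : Set X, IsClosed E → f '' E ⊆ E → E = ∅ ∨ E = univ)
    (z : X) {U : Set X} (hU : IsOpen U) (hUne : U.Nonempty) : ∃ n, f^[n] z ∈ U := by
  have horbit : f '' range (fun n => f^[n] z) ⊆ range (fun n => f^[n] z) := by
    rintro _ ⟨_, ⟨n, rfl⟩, rfl⟩
    exact ⟨n + 1, Function.iterate_succ_apply' f n z⟩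
  rcases hmin _ isClosed_closure
    ((image_closure_subset_closure_image hf).trans (closure_mono horbit)) with h | h
  · have hz : z ∈ closure (range fun n => f^[n] z) := subset_closure ⟨0, rfl⟩
    simp [h] at hz
  · obtain ⟨_, ⟨n, rfl⟩, hn⟩ := (dense_iff_closure_eq.2 h).exists_mem_open hU hUne
    exact ⟨n, hn⟩

theorem IsOpenMap.iterate {X : Type*} [TopologicalSpace X] {f : X → X} (hf : IsOpenMap f)
    (n : ℕ) : IsOpenMap f^[n] := by
  induction n with
  | zero => exact IsOpenMap.id
  | succ n ih => exact Function.iterate_succ f n ▸ ih.comp hf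

theorem ContinuousMap.exists_apply_pos {X : Type*} [TopologicalSpace X] {a : C(X, ℝ)}
    (ha0 : 0 ≤ a) (ha : a ≠ 0) : ∃ x, 0 < a x := by
  by_contra! h
  exact ha (ContinuousMap.ext fun x => le_antisymm (h x) (ha0 x))

theorem toC_mul {X : Type*} [TopologicalSpace X] (f g : C(X, ℝ)) :
    toC (f * g) = toC f * toC g := by
  ext x
  simp [toC]

theorem star_toC {X : Type*} [TopologicalSpace X] (f : C(X, ℝ)) : star (toC f) = toC f := by
  ext x
  simp [toC]

section OrbitBreaking

variable {X : Type*} [TopologicalSpace X] [CompactSpace X] {α : X ≃ₜ X}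
  {V : X → Type*} [∀ x, NormedAddCommGroup (V x)] [∀ x, InnerProductSpace ℂ (V x)]
  [TopologicalSpace (TotalSpace ℂ V)]
  {B : Type*} [NormedRing B] [StarRing B] [NormedAlgebra ℂ B] [StarModule ℂ B]
  [ContinuousStar B] {p : C(X, ℂ) →⋆ₐ[ℂ] B} {t : Sect V → B} {Y : Set X}

theorem apply_mem_OBalg (g : C(X, ℂ)) : p g ∈ OBalg α V B p t Y :=
  StarSubalgebra.le_topologicalClosure _ (StarAlgebra.subset_adjoin ℂ _ (Or.inl ⟨g, rfl⟩))

theorem sect_mem_OBalg {ξ : Sect V} (hξ : ∀ x, α x ∈ Y → ξ.1 x = 0) :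
    t ξ ∈ OBalg α V B p t Y :=
  StarSubalgebra.le_topologicalClosure _ (StarAlgebra.subset_adjoin ℂ _ (Or.inr ⟨ξ, hξ, rfl⟩))

theorem exactCuntzLE_toC_mul {A C : C(X, ℝ)} (hC : 0 ≤ C) :
    ExactCuntzLE (OBalg α V B p t Y) (p (toC (A * C))) (p (toC A)) := by
  let sqrtC : C(X, ℝ) := (⟨Real.sqrt, Real.continuous_sqrt⟩ : C(ℝ, ℝ)).comp C
  refine ⟨p (toC sqrtC), apply_mem_OBalg _, ?_⟩
  rw [← map_star, star_toC, ← map_mul, ← map_mul, ← toC_mul, ← toC_mul]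
  congr 2
  ext x
  simp only [sqrtC, ContinuousMap.comp_apply, ContinuousMap.mul_apply, ContinuousMap.coe_mk]
  rw [mul_comm, ← mul_assoc, Real.mul_self_sqrt (show 0 ≤ C x from hC x), mul_comm]

theorem exists_exactCuntzLE_comp_mul [T2Space X] [FiberBundle ℂ V] [VectorBundle ℂ ℂ V]
    (hrep : IsCovRep α V B p t) (hYcl : IsClosed Y) {q : X}
    (hq : ∃ U ∈ 𝓝 q, TrivialOver V U) (hαq : α q ∉ Y) {c : C(X, ℝ)} (hc : 0 ≤ c) :
    ∃ c' : C(X, ℝ), 0 ≤ c' ∧ c' q = c (α q) ∧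
      ExactCuntzLE (OBalg α V B p t Y) (p (toC c')) (p (toC c)) := by
  obtain ⟨U, hU, hUV⟩ := hq
  obtain ⟨ξ, φ, hφq, hξφ, hξY⟩ := exists_sect_norm_eq_bump hU hUV
    (hYcl.isOpen_compl.preimage α.continuous) hαq
  let η : Sect V := ⟨fun x => toC c (α x) • ξ.1 x,
    continuous_totalSpaceMk_smul_of_continuousOn isOpen_univ ξ.2.continuousOn (by fun_prop)
      (subset_univ _)⟩
  have hη : t η = p (toC c) * t ξ := hrep.left_act _ ξ η fun _ => rfl
  have hinner : star (t ξ) * t η = p (toC (c.comp (α : C(X, X)) * φ * φ)) :=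
    hrep.inner_right ξ η _ fun x => by
      simp only [η, toC, ContinuousMap.coe_mk, Complex.coe_smul,
        CStarModule.inner_smul_right_real, inner_self_eq_norm_sq_to_K, hξφ, Complex.coe_algebraMap,
        Complex.real_smul, ContinuousMap.mul_apply, ContinuousMap.comp_apply, Complex.ofReal_mul]
      ring
  refine ⟨c.comp (α : C(X, X)) * φ * φ, fun x => ?_, by simp [hφq], star (t ξ),
    star_mem (sect_mem_OBalg fun x hx => hξY x (not_not_intro hx)), ?_⟩
  · simpa [mul_assoc] using mul_nonneg (hc (α x)) (mul_self_nonneg (φ x))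
  · rw [star_star, mul_assoc, ← hη, hinner]

theorem exists_exactCuntzLE_iterate [T2Space X] [FiberBundle ℂ V] [VectorBundle ℂ ℂ V]
    (hrep : IsCovRep α V B p t) (hYcl : IsClosed Y) {x₀ : X} {n : ℕ}
    (htriv : ∀ j < n, ∃ U ∈ 𝓝 ((⇑α)^[j] x₀), TrivialOver V U)
    (hY : ∀ j < n, (⇑α)^[j + 1] x₀ ∉ Y) {c : C(X, ℝ)} (hc : 0 ≤ c) :
    ∃ c' : C(X, ℝ), 0 ≤ c' ∧ c' x₀ = c ((⇑α)^[n] x₀) ∧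
      ExactCuntzLE (OBalg α V B p t Y) (p (toC c')) (p (toC c)) := by
  induction n generalizing c with
  | zero => exact ⟨c, hc, rfl, .refl _⟩
  | succ n ih =>
    have hαn : α ((⇑α)^[n] x₀) ∉ Y := by
      simpa only [Function.iterate_succ_apply'] using hY n n.lt_succ_self
    obtain ⟨c₁, hc₁, hc₁x, h₁⟩ :=
      exists_exactCuntzLE_comp_mul hrep hYcl (htriv n n.lt_succ_self) hαn hc
    obtain ⟨c', hc', hc'x, h'⟩ :=
      ih (fun j hj => htriv j (by omega)) (fun j hj => hY j (by omega)) hc₁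
    exact ⟨c', hc', by rw [hc'x, hc₁x, Function.iterate_succ_apply'], h'.trans h₁⟩

end OrbitBreaking

theorem statement16_general
    (X : Type*) [MetricSpace X] [CompactSpace X]
    (α : X ≃ₜ X)
    -- α is minimal
    (hmin : ∀ E : Set X, IsClosed E → (⇑α) '' E ⊆ E → E = ∅ ∨ E = Set.univ)
    (V : X → Type*) [∀ x, NormedAddCommGroup (V x)] [∀ x, InnerProductSpace ℂ (V x)]
    [TopologicalSpace (Bundle.TotalSpace ℂ V)] [FiberBundle ℂ V] [VectorBundle ℂ ℂ V]
    (B : Type*) [NormedRing B] [StarRing B] [NormedAlgebra ℂ B]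
    [StarModule ℂ B] [ContinuousStar B]
    (p : C(X, ℂ) →⋆ₐ[ℂ] B) (t : Sect V → B)
    (hrep : IsCovRep α V B p t)
    (Y : Set X) (hYne : Y.Nonempty) (hYcl : IsClosed Y)
    -- Y meets each α-orbit at most once
    (horbit : ∀ n : ℕ, 0 < n → ∀ y ∈ Y, (⇑α)^[n] y ∉ Y)
    -- for each N there is an open W ⊇ Y with 𝒱 trivial over αⁿ(W), |n| ≤ N
    (htriv : ∀ N : ℕ, ∃ W : Set X, IsOpen W ∧ Y ⊆ W ∧
      ∀ n ≤ N, TrivialOver V ((⇑α)^[n] '' W) ∧ TrivialOver V ((⇑α.symm)^[n] '' W))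
    -- a, b nonzero positive elements of C(X)
    (a b : C(X, ℝ)) (ha0 : 0 ≤ a) (ha : a ≠ 0) (hb0 : 0 ≤ b) (hb : b ≠ 0) :
    ∃ f : C(X, ℝ), 0 ≤ f ∧ f ≠ 0 ∧
      CuntzLE (OBalg α V B p t Y) (p (toC f)) (p (toC a)) ∧
      CuntzLE (OBalg α V B p t Y) (p (toC f)) (p (toC b)) := by
  obtain ⟨y, hy⟩ := hYne
  obtain ⟨m, hm⟩ := exists_iterate_mem_of_minimal α.continuous hmin y
    (isOpen_lt continuous_const a.continuous) (a.exists_apply_pos ha0 ha)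
  obtain ⟨k, hk⟩ := exists_iterate_mem_of_minimal α.continuous hmin y
    (isOpen_lt continuous_const b.continuous) (b.exists_apply_pos hb0 hb)
  obtain ⟨W, hW, hYW, hWV⟩ := htriv (max m k)
  have hnhds : ∀ j ≤ max m k, ∃ U ∈ 𝓝 ((⇑α)^[j] y), TrivialOver V U := fun j hj =>
    ⟨_, (α.isOpenMap.iterate j).image_mem_nhds (hW.mem_nhds (hYW hy)), (hWV j hj).1⟩
  have hY : ∀ j : ℕ, (⇑α)^[j + 1] y ∉ Y := fun j => horbit (j + 1) j.succ_pos y hy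
  obtain ⟨A, hA0, hAy, hAa⟩ := exists_exactCuntzLE_iterate (n := m) hrep hYcl
    (fun j hj => hnhds j (by omega)) (fun j _ => hY j) ha0
  obtain ⟨C, hC0, hCy, hCb⟩ := exists_exactCuntzLE_iterate (n := k) hrep hYcl
    (fun j hj => hnhds j (by omega)) (fun j _ => hY j) hb0
  refine ⟨A * C, mul_nonneg hA0 hC0, fun h => ?_, (exactCuntzLE_toC_mul hC0).trans hAa |>.cuntzLE,
    ?_⟩
  · have hpos : 0 < A y * C y := mul_pos (hAy ▸ hm) (hCy ▸ hk)
    simp [← ContinuousMap.mul_apply, h] at hpos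
  · rw [mul_comm]
    exact ((exactCuntzLE_toC_mul hA0).trans hCb).cuntzLE

theorem statement16
    (X : Type*) [MetricSpace X] [CompactSpace X] [Infinite X]
    (α : X ≃ₜ X)
    -- α is minimal
    (hmin : ∀ E : Set X, IsClosed E → (⇑α) '' E ⊆ E → E = ∅ ∨ E = Set.univ)
    (V : X → Type*) [∀ x, NormedAddCommGroup (V x)] [∀ x, InnerProductSpace ℂ (V x)]
    [TopologicalSpace (Bundle.TotalSpace ℂ V)] [FiberBundle ℂ V] [VectorBundle ℂ ℂ V]
    (B : Type*) [NormedRing B] [StarRing B] [CStarRing B] [NormedAlgebra ℂ B]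
    [StarModule ℂ B] [ContinuousStar B] [CompleteSpace B]
    (p : C(X, ℂ) →⋆ₐ[ℂ] B) (t : Sect V → B)
    (hrep : IsCovRep α V B p t)
    (Y : Set X) (hYne : Y.Nonempty) (hYcl : IsClosed Y)
    -- Y meets each α-orbit at most once
    (horbit : ∀ n : ℕ, 0 < n → ∀ y ∈ Y, (⇑α)^[n] y ∉ Y)
    -- for each N there is an open W ⊇ Y with 𝒱 trivial over αⁿ(W), |n| ≤ N
    (htriv : ∀ N : ℕ, ∃ W : Set X, IsOpen W ∧ Y ⊆ W ∧
      ∀ n ≤ N, TrivialOver V ((⇑α)^[n] '' W) ∧ TrivialOver V ((⇑α.symm)^[n] '' W))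
    -- a, b nonzero positive elements of C(X)
    (a b : C(X, ℝ)) (ha0 : 0 ≤ a) (ha : a ≠ 0) (hb0 : 0 ≤ b) (hb : b ≠ 0) :
    ∃ f : C(X, ℝ), 0 ≤ f ∧ f ≠ 0 ∧
      CuntzLE (OBalg α V B p t Y) (p (toC f)) (p (toC a)) ∧
      CuntzLE (OBalg α V B p t Y) (p (toC f)) (p (toC b)) :=
  statement16_general X α hmin V B p t hrep Y hYne hYcl horbit htriv a b ha0 ha hb0 hb
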